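/- For every μ > 0 and every real a with 0 ≤ a < μ, the mean deviation of SSLUD(μ) about a satisfies ∫_{ℝ} |x - a| · g(x) dx = (a/μ) e^{-μ} + (a/μ + 2/μ + 1) e^{-a} + (a - 2/μ). -/

import Mathlib

/-!
On `[-μ, μ]` the density is `(x + μ) / (2μ) · e^{-|x|}`, so on each of `[-μ, 0]`, `[0, a]`
and `[a, μ]` the integrand `|x - a| g(x)` is a quadratic polynomial `p` times `e^{±x}`, and
`(p / s - p' / s² + p'' / s³) e^{sx}` is a primitive of `p(x) e^{sx}`. On `(μ, ∞)` the
integrand is `(x - a) e^{-x}`, with primitive `-(x - a + 1) e^{-x}` vanishing at infinity;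
below `-μ` it is zero.
-/

open MeasureTheory Real

noncomputable def g (μ : ℝ) (x : ℝ) : ℝ :=
  if x < -μ then 0
  else if x < μ then Real.exp (-|x|) * (x / (2 * μ) + 1 / 2)
  else Real.exp (-x)

open Set Filter Topology

noncomputable def quadraticMulExpPrimitive (A B C s x : ℝ) : ℝ :=
  ((A * x ^ 2 + B * x + C) / s - (2 * A * x + B) / s ^ 2 + 2 * A / s ^ 3) * exp (s * x)

section QuadraticMulExp

variable {s : ℝ} (A B C : ℝ)

theorem hasDerivAt_quadraticMulExpPrimitive (hs : s ≠ 0) (x : ℝ) :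
    HasDerivAt (quadraticMulExpPrimitive A B C s)
      ((A * x ^ 2 + B * x + C) * exp (s * x)) x := by
  have hq : HasDerivAt (fun x => A * x ^ 2 + B * x + C) (2 * A * x + B) x :=
    (((hasDerivAt_pow 2 x).const_mul A).add ((hasDerivAt_id x).const_mul B)).add_const C
      |>.congr_deriv (by simp only [Nat.cast_ofNat, Nat.add_one_sub_one, pow_one]; ring)
  have hq' : HasDerivAt (fun x => 2 * A * x + B) (2 * A) x := by
    simpa using ((hasDerivAt_id x).const_mul (2 * A)).add_const B
  have he : HasDerivAt (fun x => exp (s * x)) (exp (s * x) * s) x := by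
    simpa using ((hasDerivAt_id x).const_mul s).exp
  have hp : HasDerivAt
      (fun x => (A * x ^ 2 + B * x + C) / s - (2 * A * x + B) / s ^ 2 + 2 * A / s ^ 3)
      ((2 * A * x + B) / s - 2 * A / s ^ 2) x :=
    ((hq.div_const s).sub (hq'.div_const _)).add_const _
  exact (hp.mul he).congr_deriv (by field_simp; ring)

theorem integral_quadratic_mul_exp (hs : s ≠ 0) {f : ℝ → ℝ} {l r : ℝ} (hlr : l ≤ r)
    (hf : ∀ x ∈ Icc l r, f x = (A * x ^ 2 + B * x + C) * exp (s * x)) :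
    ∫ x in l..r, f x =
      quadraticMulExpPrimitive A B C s r - quadraticMulExpPrimitive A B C s l := by
  rw [intervalIntegral.integral_congr (by rwa [uIcc_of_le hlr])]
  exact intervalIntegral.integral_eq_sub_of_hasDerivAt
    (fun x _ => hasDerivAt_quadraticMulExpPrimitive A B C hs x)
    (Continuous.intervalIntegrable (by fun_prop) l r)

end QuadraticMulExp

theorem hasDerivAt_neg_sub_add_one_mul_exp_neg (a x : ℝ) :
    HasDerivAt (fun x => -(x - a + 1) * exp (-x)) ((x - a) * exp (-x)) x :=
  ((((hasDerivAt_id x).sub_const a).add_const 1).neg.mul (hasDerivAt_neg x).exp).congr_deriv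
    (by simp only [id_eq, Pi.neg_apply]; ring)

theorem tendsto_neg_sub_add_one_mul_exp_neg (a : ℝ) :
    Tendsto (fun x => -(x - a + 1) * exp (-x)) atTop (𝓝 0) := by
  have h := ((tendsto_pow_mul_exp_neg_atTop_nhds_zero 1).add
    (tendsto_exp_neg_atTop_nhds_zero.const_mul (1 - a))).neg
  simp only [pow_one, mul_zero, add_zero, neg_zero] at h
  exact h.congr fun x => by ring

section Tail

variable {a c : ℝ}

theorem integrableOn_Ioi_sub_mul_exp_neg (hac : a ≤ c) :
    IntegrableOn (fun x => (x - a) * exp (-x)) (Ioi c) :=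
  integrableOn_Ioi_deriv_of_nonneg' (fun x _ => hasDerivAt_neg_sub_add_one_mul_exp_neg a x)
    (fun x hx => mul_nonneg (by linarith [hx.out]) (exp_pos _).le)
    (tendsto_neg_sub_add_one_mul_exp_neg a)

theorem integral_Ioi_sub_mul_exp_neg (hac : a ≤ c) :
    ∫ x in Ioi c, (x - a) * exp (-x) = (c - a + 1) * exp (-c) := by
  rw [integral_Ioi_of_hasDerivAt_of_nonneg'
    (fun x _ => hasDerivAt_neg_sub_add_one_mul_exp_neg a x)
    (fun x hx => mul_nonneg (by linarith [hx.out]) (exp_pos _).le)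
    (tendsto_neg_sub_add_one_mul_exp_neg a)]
  ring

end Tail

section SSLUD

variable {μ a : ℝ}

theorem g_eq_zero_of_le_neg (hμ : 0 < μ) {x : ℝ} (hx : x ≤ -μ) : g μ x = 0 := by
  rcases hx.lt_or_eq with hx | rfl
  · rw [g, if_pos hx]
  · rw [g, if_neg (lt_irrefl _), if_pos (by linarith), show -μ / (2 * μ) + 1 / 2 = 0 by
      field_simp; ring, mul_zero]

theorem g_of_mem_Icc (hμ : 0 < μ) {x : ℝ} (hx : x ∈ Icc (-μ) μ) :
    g μ x = exp (-|x|) * (x / (2 * μ) + 1 / 2) := by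
  rw [g, if_neg (not_lt.2 hx.1)]
  rcases hx.2.lt_or_eq with hx' | rfl
  · rw [if_pos hx']
  · rw [if_neg (lt_irrefl _), abs_of_pos hμ, show x / (2 * x) + 1 / 2 = 1 by field_simp; ring,
      mul_one]

theorem g_of_le (hμ : 0 ≤ μ) {x : ℝ} (hx : μ ≤ x) : g μ x = exp (-x) := by
  rw [g, if_neg (by linarith), if_neg (not_lt.2 hx)]

theorem eqOn_abs_sub_mul_g_Icc (hμ : 0 < μ) :
    EqOn (fun x => |x - a| * g μ x) (fun x => |x - a| * (exp (-|x|) * (x / (2 * μ) + 1 / 2)))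
      (Icc (-μ) μ) :=
  fun x hx => by dsimp only; rw [g_of_mem_Icc hμ hx]

theorem integrableOn_abs_sub_mul_g_Ioc (hμ : 0 < μ) :
    IntegrableOn (fun x => |x - a| * g μ x) (Ioc (-μ) μ) :=
  ((by fun_prop : Continuous fun x => |x - a| * (exp (-|x|) * (x / (2 * μ) + 1 / 2)))
    |>.integrableOn_Icc.mono_set Ioc_subset_Icc_self).congr_fun
    ((eqOn_abs_sub_mul_g_Icc hμ).symm.mono Ioc_subset_Icc_self) measurableSet_Ioc

theorem integral_abs_sub_mul_g_Ioc (hμ : 0 < μ) (ha : 0 ≤ a) (haμ : a < μ) :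
    ∫ x in Ioc (-μ) μ, |x - a| * g μ x =
      (a / μ + a - μ - 1) * exp (-μ) + (a / μ + 2 / μ + 1) * exp (-a) + (a - 2 / μ) := by
  set φ := fun x => |x - a| * (exp (-|x|) * (x / (2 * μ) + 1 / 2))
  have hφ : ∀ u v, IntervalIntegrable φ volume u v :=
    (by fun_prop : Continuous φ).intervalIntegrable
  rw [setIntegral_congr_fun measurableSet_Ioc
      ((eqOn_abs_sub_mul_g_Icc hμ).mono Ioc_subset_Icc_self),
    ← intervalIntegral.integral_of_le (by linarith),
    ← intervalIntegral.integral_add_adjacent_intervals (hφ _ 0) (hφ 0 _),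
    ← intervalIntegral.integral_add_adjacent_intervals (hφ 0 a) (hφ a _)]
  -- `(a - x) * (x / (2 * μ) + 1 / 2) = A * x ^ 2 + B * x + C`; on `[a, μ]` the signs flip.
  set A := -1 / (2 * μ)
  set B := a / (2 * μ) - 1 / 2
  set C := a / 2
  rw [integral_quadratic_mul_exp A B C one_ne_zero (by linarith) fun x hx => by
      simp only [φ, abs_of_nonpos (by linarith [hx.2] : x - a ≤ 0), abs_of_nonpos hx.2,
        neg_neg, one_mul]
      ring,
    integral_quadratic_mul_exp A B C (neg_ne_zero.2 one_ne_zero) ha fun x hx => by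
      simp only [φ, abs_of_nonpos (by linarith [hx.2] : x - a ≤ 0), abs_of_nonneg hx.1,
        neg_one_mul]
      ring,
    integral_quadratic_mul_exp (-A) (-B) (-C) (neg_ne_zero.2 one_ne_zero) haμ.le fun x hx => by
      simp only [φ, abs_of_nonneg (by linarith [hx.1] : 0 ≤ x - a),
        abs_of_nonneg (by linarith [hx.1] : 0 ≤ x), neg_one_mul]
      ring]
  simp only [quadraticMulExpPrimitive, A, B, C, one_mul, neg_one_mul, mul_zero,
    exp_zero]
  field_simp
  ring

end SSLUD

theorem sslud_mean_deviation_mid (μ : ℝ) (hμ : 0 < μ) (a : ℝ) (h1 : 0 ≤ a) (h2 : a < μ) :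
    (∫ x : ℝ, |x - a| * g μ x) =
      (a / μ) * Real.exp (-μ) + (a / μ + 2 / μ + 1) * Real.exp (-a) + (a - 2 / μ) := by
  have hzero : ∀ x ∉ Ioi (-μ), |x - a| * g μ x = 0 := fun x hx => by
    rw [g_eq_zero_of_le_neg hμ (not_lt.1 hx), mul_zero]
  have htail : EqOn (fun x => |x - a| * g μ x) (fun x => (x - a) * exp (-x)) (Ioi μ) :=
    fun x hx => by dsimp only; rw [g_of_le hμ.le hx.out.le, abs_of_pos (by linarith [hx.out])]
  rw [← setIntegral_eq_integral_of_forall_compl_eq_zero hzero,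
    ← Ioc_union_Ioi_eq_Ioi (by linarith : -μ ≤ μ),
    setIntegral_union (Ioc_disjoint_Ioi le_rfl) measurableSet_Ioi
      (integrableOn_abs_sub_mul_g_Ioc hμ)
      ((integrableOn_Ioi_sub_mul_exp_neg h2.le).congr_fun htail.symm measurableSet_Ioi),
    setIntegral_congr_fun measurableSet_Ioi htail, integral_abs_sub_mul_g_Ioc hμ h1 h2,
    integral_Ioi_sub_mul_exp_neg h2.le]
  ring
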